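/- In the exponential example, the PAXp's (for δ = 1, class True, point v) are precisely the subsets of {1,…,2m} of cardinality exactly m; consequently the number of PAXp's equals the binomial coefficient C(2m, m). -/

import Mathlib

/-!
`Prop(X) = 1` says that every completion of `v` off `X` is classified `True`, which holds iff
the worst completion (all free features `0`) is, i.e. iff `X` contains at least `m` of the
first `2m` features. Being minimal for a condition of the form `m ≤ #(X ∩ S)` means being an
`m`-element subset of `S`.
-/

open Finset

/-- The feature space of the exponential example with `n = 2m+1` features: the first
`2m` features have domain `{0,1}` and the last feature has domain `{0,1,n}`, encoded
as functions into `Fin 3` (with the value `2` of the last feature encoding `n`)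
whose first `2m` coordinates are `< 2`. -/
abbrev ExpF (m : ℕ) :=
  {x : Fin (2 * m + 1) → Fin 3 // ∀ i : Fin (2 * m + 1), (i : ℕ) < 2 * m → (x i : ℕ) < 2}

/-- The classifier of the exponential example: `x` is classified `true` iff at least `m`
of its first `2m` features have value `1` (i.e. the goal is reachable in one step). -/
def expκ (m : ℕ) (x : ExpF m) : Bool :=
  decide (m ≤ (Finset.univ.filter
    (fun i : Fin (2 * m + 1) => (i : ℕ) < 2 * m ∧ x.1 i = 1)).card)

/-- The specific point `v = (1,…,1,0)` of the exponential example. -/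
def expv (m : ℕ) : ExpF m :=
  ⟨fun i => if (i : ℕ) < 2 * m then 1 else 0, by
    intro i h
    simp only [if_pos h]
    decide⟩

/-- `Prop(X)` in the exponential example: the proportion, among points agreeing with
`v` on `X`, of points classified `true`. -/
noncomputable def expProp (m : ℕ) (X : Finset (Fin (2 * m + 1))) : ℝ :=
  ((Finset.univ.filter
      (fun x : ExpF m => (∀ i ∈ X, x.1 i = (expv m).1 i) ∧ expκ m x = true)).card : ℝ) /
  ((Finset.univ.filter (fun x : ExpF m => ∀ i ∈ X, x.1 i = (expv m).1 i)).card : ℝ)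

/-- `X` is a weak PAXp (for threshold `δ = 1`, class `true`, point `v`) in the
exponential example. -/
def ExpIsWeakPAXp (m : ℕ) (X : Finset (Fin (2 * m + 1))) : Prop :=
  1 ≤ expProp m X

/-- `X` is a PAXp (subset-minimal weak PAXp) in the exponential example. -/
def ExpIsPAXp (m : ℕ) (X : Finset (Fin (2 * m + 1))) : Prop :=
  ExpIsWeakPAXp m X ∧ ∀ Y ⊂ X, ¬ ExpIsWeakPAXp m Y

section Counting

variable {α : Type*} (p : α → Prop) [DecidablePred p]

theorem one_le_card_filter_div_card_iff {s : Finset α} (hs : s.Nonempty) :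
    1 ≤ (#(s.filter p) : ℝ) / #s ↔ ∀ x ∈ s, p x := by
  have hpos : (0 : ℝ) < #s := by exact_mod_cast hs.card_pos
  rw [one_le_div hpos, Nat.cast_le, ← card_filter_eq_iff]
  exact ⟨(card_filter_le s p).antisymm, Eq.ge⟩

theorem minimal_le_card_filter_iff [DecidableEq α] (k : ℕ) (X : Finset α) :
    Minimal (fun Y : Finset α => k ≤ #(Y.filter p)) X ↔ (∀ i ∈ X, p i) ∧ #X = k := by
  rw [minimal_iff_forall_lt]
  constructor
  · rintro ⟨hX, hmin⟩
    have hall : ∀ i ∈ X, p i := by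
      by_contra! h
      refine hmin (filter_ssubset.2 h) ?_
      simpa only [filter_filter, and_self] using hX
    rw [filter_true_of_mem hall] at hX
    refine ⟨hall, hX.antisymm' ?_⟩
    by_contra! hlt
    obtain ⟨Y, hYX, hY⟩ := exists_subset_card_eq hX
    have hYssub : Y ⊂ X := ssubset_of_subset_of_ne hYX (by rintro rfl; omega)
    exact hmin hYssub (by rw [filter_true_of_mem fun i hi => hall i (hYX hi), hY])
  · rintro ⟨hall, rfl⟩
    refine ⟨by rw [filter_true_of_mem hall], fun Y hY => ?_⟩
    exact ((card_filter_le Y p).trans_lt (card_lt_card hY)).not_ge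

theorem ncard_setOf_forall_mem_and_card_eq [Fintype α] (k : ℕ) :
    {X : Finset α | (∀ i ∈ X, p i) ∧ #X = k}.ncard = (#(univ.filter p)).choose k := by
  rw [← card_powersetCard, ← Set.ncard_coe_finset]
  congr 1
  ext X
  simp [mem_powersetCard, subset_iff]

end Counting

def expOnes (m : ℕ) (x : ExpF m) : Finset (Fin (2 * m + 1)) :=
  univ.filter fun i => (i : ℕ) < 2 * m ∧ x.1 i = 1

theorem expκ_eq_true_iff {m : ℕ} (x : ExpF m) : expκ m x = true ↔ m ≤ #(expOnes m x) :=
  decide_eq_true_iff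

def expZeroCompletion (m : ℕ) (X : Finset (Fin (2 * m + 1))) : ExpF m :=
  ⟨fun i => if i ∈ X then (expv m).1 i else 0, fun i hi => by
    dsimp only
    split_ifs
    exacts [(expv m).2 i hi, by decide]⟩

section

variable {m : ℕ} {X : Finset (Fin (2 * m + 1))}

theorem expIsWeakPAXp_iff_forall :
    ExpIsWeakPAXp m X ↔
      ∀ x : ExpF m, (∀ i ∈ X, x.1 i = (expv m).1 i) → expκ m x = true := by
  unfold ExpIsWeakPAXp expProp
  rw [← filter_filter, one_le_card_filter_div_card_iff _ ⟨expv m, by simp⟩]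
  simp

theorem filter_lt_subset_expOnes {x : ExpF m} (hx : ∀ i ∈ X, x.1 i = (expv m).1 i) :
    X.filter (fun i : Fin (2 * m + 1) => (i : ℕ) < 2 * m) ⊆ expOnes m x := by
  intro i hi
  rw [mem_filter] at hi
  simp [expOnes, hx i hi.1, expv, hi.2]

theorem expOnes_expZeroCompletion :
    expOnes m (expZeroCompletion m X) =
      X.filter (fun i : Fin (2 * m + 1) => (i : ℕ) < 2 * m) := by
  ext i
  rw [expOnes, mem_filter, mem_filter]
  by_cases hi : i ∈ X <;> simp [expZeroCompletion, expv, hi]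

theorem expIsPAXp_iff_minimal : ExpIsPAXp m X ↔ Minimal (ExpIsWeakPAXp m) X :=
  minimal_iff_forall_lt.symm

theorem expIsWeakPAXp_iff_le_card :
    ExpIsWeakPAXp m X ↔ m ≤ #(X.filter (fun i : Fin (2 * m + 1) => (i : ℕ) < 2 * m)) := by
  rw [expIsWeakPAXp_iff_forall]
  refine ⟨fun h => ?_, fun h x hx => ?_⟩
  · have := h (expZeroCompletion m X) fun i hi => if_pos hi
    rwa [expκ_eq_true_iff, expOnes_expZeroCompletion] at this
  · exact (expκ_eq_true_iff x).2 (h.trans (card_le_card (filter_lt_subset_expOnes hx)))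

end

theorem expIsPAXp_iff_and_count_general (m : ℕ) :
    (∀ X : Finset (Fin (2 * m + 1)),
        ExpIsPAXp m X ↔ ((∀ i ∈ X, (i : ℕ) < 2 * m) ∧ X.card = m)) ∧
    {X : Finset (Fin (2 * m + 1)) | ExpIsPAXp m X}.ncard = Nat.choose (2 * m) m := by
  have hweak : ExpIsWeakPAXp m =
      fun Y => m ≤ #(Y.filter (fun i : Fin (2 * m + 1) => (i : ℕ) < 2 * m)) :=
    funext fun _ => propext expIsWeakPAXp_iff_le_card
  have hiff : ∀ X : Finset (Fin (2 * m + 1)),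
      ExpIsPAXp m X ↔ ((∀ i ∈ X, (i : ℕ) < 2 * m) ∧ X.card = m) := fun X => by
    rw [expIsPAXp_iff_minimal, hweak, minimal_le_card_filter_iff]
  refine ⟨hiff, ?_⟩
  have hset : {X | ExpIsPAXp m X} =
      {X : Finset (Fin (2 * m + 1)) | (∀ i ∈ X, (i : ℕ) < 2 * m) ∧ #X = m} :=
    Set.ext hiff
  rw [hset, ncard_setOf_forall_mem_and_card_eq, Fin.card_filter_val_lt,
    min_eq_right (Nat.le_succ _)]

/-- in the exponential example, the PAXp's (for `δ = 1`, class `true`,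
point `v`) are exactly the subsets of the first `2m` features of cardinality `m`;
consequently there are exactly `C(2m, m)` PAXp's. -/
theorem expIsPAXp_iff_and_count (m : ℕ) (hm : 1 ≤ m) :
    (∀ X : Finset (Fin (2 * m + 1)),
        ExpIsPAXp m X ↔ ((∀ i ∈ X, (i : ℕ) < 2 * m) ∧ X.card = m)) ∧
    {X : Finset (Fin (2 * m + 1)) | ExpIsPAXp m X}.ncard = Nat.choose (2 * m) m :=
  expIsPAXp_iff_and_count_general m
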